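/- (Key inequality for the 2-approximation of greedy peeling.) Let S* ⊆ V be a nonempty set maximizing the density d over all nonempty subsets of V, let S′ ⊆ V with S* ⊆ S′, and let v* ∈ S* be a vertex of minimum degree in G[S′], i.e., deg_{S′}(v*) ≤ deg_{S′}(u) for all u ∈ S′. Then d(S′) ≥ (1/2)·d(S*). -/

import Mathlib

open scoped Classical

variable {V : Type*} [Fintype V]

/-- `e[S]`: the number of edges of `G` with both endpoints in `S`. -/
noncomputable def edgeCount (G : SimpleGraph V) (S : Finset V) : ℕ :=
  (G.edgeFinset.filter (fun e => ∀ v ∈ e, v ∈ S)).card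

/-- `d(S) = e[S] / |S|`: the degree density of `S`. -/
noncomputable def density (G : SimpleGraph V) (S : Finset V) : ℝ :=
  (edgeCount G S : ℝ) / (S.card : ℝ)

/-- `deg_S(v)`: the degree of `v` in the subgraph induced by `S`. -/
noncomputable def degIn (G : SimpleGraph V) (S : Finset V) (v : V) : ℕ :=
  (S.filter (fun u => G.Adj v u)).card

lemma degIn_mono (G : SimpleGraph V) {S T : Finset V} (h : S ⊆ T) (v : V) :
    degIn G S v ≤ degIn G T v :=
  Finset.card_le_card (Finset.filter_subset_filter _ h)

lemma sum_degIn (G : SimpleGraph V) (S : Finset V) :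
    ∑ u ∈ S, degIn G S u = 2 * edgeCount G S := by
  classical
  set P := (S ×ˢ S).filter (fun p => G.Adj p.1 p.2) with hP
  have h1 : ∑ u ∈ S, degIn G S u = P.card := by
    rw [Finset.card_eq_sum_card_fiberwise (f := Prod.fst) (t := S)
      (fun p hp => by
        simp only [hP, Finset.mem_coe, Finset.mem_filter, Finset.mem_product] at hp
        exact hp.1.1)]
    refine Finset.sum_congr rfl (fun u hu => ?_)
    rw [degIn]
    have himg : P.filter (fun p => p.1 = u) = (S.filter (fun w => G.Adj u w)).image (fun w => (u, w)) := by
      ext ⟨x, y⟩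
      simp only [hP, Finset.mem_filter, Finset.mem_product, Finset.mem_image, Prod.mk.injEq]
      constructor
      · rintro ⟨⟨⟨hx, hy⟩, hadj⟩, rfl⟩
        exact ⟨y, ⟨hy, hadj⟩, rfl, rfl⟩
      · rintro ⟨w, ⟨hw, hadj⟩, rfl, rfl⟩
        exact ⟨⟨⟨hu, hw⟩, hadj⟩, rfl⟩
    rw [himg, Finset.card_image_of_injective _ (fun a b h => (Prod.mk.injEq _ _ _ _ ▸ h).2)]
  have h2 : P.card = 2 * edgeCount G S := by
    rw [edgeCount, Finset.card_eq_sum_card_fiberwise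
      (f := fun p : V × V => s(p.1, p.2))
      (s := P) (t := G.edgeFinset.filter (fun (e : Sym2 V) => ∀ v ∈ e, v ∈ S))
      (fun p hp => by
        simp only [hP, Finset.mem_coe, Finset.mem_filter, Finset.mem_product] at hp
        simp only [Finset.mem_coe, Finset.mem_filter, SimpleGraph.mem_edgeFinset, Sym2.mem_iff]
        exact ⟨hp.2, fun v hv => by
          rcases hv with h | h
          · exact h ▸ hp.1.1
          · exact h ▸ hp.1.2⟩)]
    rw [Finset.sum_congr rfl (fun e he => ?_), Finset.sum_const, smul_eq_mul, mul_comm]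
    · simp only [Finset.mem_filter, SimpleGraph.mem_edgeFinset] at he
      obtain ⟨hadj, hmem⟩ := he
      induction e using Sym2.ind with
      | _ a b =>
        have hab : G.Adj a b := hadj
        have hmem' : ∀ w, w = a ∨ w = b → w ∈ S := fun w hw => hmem w (by
          rcases hw with h | h <;> simp [h])
        have haS : a ∈ S := hmem' a (Or.inl rfl)
        have hbS : b ∈ S := hmem' b (Or.inr rfl)
        have : P.filter (fun p => s(p.1, p.2) = s(a, b)) = {(a, b), (b, a)} := by
          ext ⟨x, y⟩
          simp only [hP, Finset.mem_filter, Finset.mem_product, Finset.mem_insert,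
            Finset.mem_singleton, Sym2.eq_iff, Prod.ext_iff]
          constructor
          · rintro ⟨_, h | h⟩
            · exact Or.inl ⟨h.1, h.2⟩
            · exact Or.inr ⟨h.1, h.2⟩
          · rintro (⟨rfl, rfl⟩ | ⟨rfl, rfl⟩)
            · exact ⟨⟨⟨haS, hbS⟩, hab⟩, Or.inl ⟨rfl, rfl⟩⟩
            · exact ⟨⟨⟨hbS, haS⟩, hab.symm⟩, Or.inr ⟨rfl, rfl⟩⟩
        rw [this, Finset.card_insert_of_notMem, Finset.card_singleton]
        simp only [Finset.mem_singleton, Prod.ext_iff, not_and]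
        exact fun h _ => hab.ne h
  rw [h1, h2]

lemma edgeCount_erase (G : SimpleGraph V) {S : Finset V} {v : V} (hv : v ∈ S) :
    edgeCount G S = edgeCount G (S.erase v) + degIn G S v := by
  classical
  rw [edgeCount, edgeCount, degIn]
  set F := G.edgeFinset.filter (fun e => ∀ w ∈ e, w ∈ S) with hF
  have split : F = F.filter (fun e => v ∈ e) ∪ F.filter (fun e => v ∉ e) :=
    (Finset.filter_union_filter_not_eq (fun e => v ∈ e) F).symm
  have hdisj : Disjoint (F.filter (fun e => v ∈ e)) (F.filter (fun e => v ∉ e)) :=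
    Finset.disjoint_filter_filter_not F F (fun e => v ∈ e)
  have hcard : F.card = (F.filter (fun e => v ∈ e)).card + (F.filter (fun e => v ∉ e)).card := by
    rw [← Finset.card_union_of_disjoint hdisj, ← split]
  have h1 : F.filter (fun e => v ∉ e)
      = G.edgeFinset.filter (fun e => ∀ w ∈ e, w ∈ S.erase v) := by
    ext e
    simp only [hF, Finset.mem_filter, and_assoc]
    constructor
    · rintro ⟨he, hS, hvn⟩
      exact ⟨he, fun w hw => Finset.mem_erase.2 ⟨fun h => hvn (h ▸ hw), hS w hw⟩⟩
    · rintro ⟨he, hS⟩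
      exact ⟨he, fun w hw => (Finset.mem_erase.1 (hS w hw)).2,
        fun hvmem => (Finset.mem_erase.1 (hS v hvmem)).1 rfl⟩
  have h2 : F.filter (fun e => v ∈ e) = (S.filter (fun u => G.Adj v u)).image (fun u => s(v, u)) := by
    ext e
    simp only [hF, Finset.mem_filter, Finset.mem_image, and_assoc]
    constructor
    · rintro ⟨he, hS, hvmem⟩
      induction e using Sym2.ind with
      | _ a b =>
        have hab : G.Adj a b := SimpleGraph.mem_edgeFinset.1 he
        rcases Sym2.mem_iff.1 hvmem with h | h
        · subst h; exact ⟨b, hS b (Sym2.mem_mk_right _ _), hab, rfl⟩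
        · subst h; exact ⟨a, hS a (Sym2.mem_mk_left _ _), hab.symm, Sym2.eq_swap⟩
    · rintro ⟨u, hu, hadj, rfl⟩
      refine ⟨SimpleGraph.mem_edgeFinset.2 hadj, fun w hw => ?_, Sym2.mem_mk_left v u⟩
      rcases Sym2.mem_iff.1 hw with h | h
      · exact h ▸ hv
      · exact h ▸ hu
  have h3 : (F.filter (fun e => v ∈ e)).card = (S.filter (fun u => G.Adj v u)).card := by
    rw [h2]
    apply Finset.card_image_of_injOn
    intro a ha b hb hab
    rw [Sym2.eq_iff] at hab
    rcases hab with ⟨_, h⟩ | ⟨h1', h2'⟩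
    · exact h
    · exact absurd h1' (Finset.mem_filter.1 hb).2.ne
  rw [hcard, h3, h1, add_comm]

/-- Key inequality for the 2-approximation of greedy peeling: if `S*` is a densest
subgraph, `S* ⊆ S'`, and `v* ∈ S*` has minimum degree in `G[S']`, then
`d(S') ≥ (1/2)·d(S*)`. -/
theorem greedy_peeling_key_inequality (G : SimpleGraph V)
    (Sstar : Finset V) (hSstar : Sstar.Nonempty)
    (hmax : ∀ T : Finset V, T.Nonempty → density G T ≤ density G Sstar)
    (S' : Finset V) (hsub : Sstar ⊆ S')
    (vstar : V) (hv : vstar ∈ Sstar)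
    (hmin : ∀ u ∈ S', degIn G S' vstar ≤ degIn G S' u) :
    (1 / 2) * density G Sstar ≤ density G S' := by
  classical
  have hv' : vstar ∈ S' := hsub hv
  have hS'ne : S'.Nonempty := ⟨vstar, hv'⟩
  have hn' : (0 : ℝ) < (S'.card : ℝ) := by exact_mod_cast Finset.card_pos.2 hS'ne
  -- Step 1: density G Sstar ≤ degIn G S' vstar
  have key : density G Sstar ≤ (degIn G S' vstar : ℝ) := by
    have hmono : (degIn G Sstar vstar : ℝ) ≤ (degIn G S' vstar : ℝ) := by
      exact_mod_cast degIn_mono G hsub vstar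
    refine le_trans ?_ hmono
    by_cases hone : (Sstar.erase vstar).Nonempty
    · have hle := hmax _ hone
      have hE : (edgeCount G Sstar : ℝ)
          = (edgeCount G (Sstar.erase vstar) : ℝ) + (degIn G Sstar vstar : ℝ) := by
        exact_mod_cast edgeCount_erase G hv
      have hc2 : 2 ≤ Sstar.card := by
        obtain ⟨w, hw⟩ := hone
        have hw' := Finset.mem_erase.1 hw
        have : ({w, vstar} : Finset V) ⊆ Sstar := by
          intro x hx
          rcases Finset.mem_insert.1 hx with rfl | hx
          · exact hw'.2
          · exact (Finset.mem_singleton.1 hx) ▸ hv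
        calc 2 = ({w, vstar} : Finset V).card := by
              rw [Finset.card_insert_of_notMem (by simpa using hw'.1), Finset.card_singleton]
          _ ≤ Sstar.card := Finset.card_le_card this
      have hn : (0 : ℝ) < (Sstar.card : ℝ) := by
        have : 0 < Sstar.card := Finset.card_pos.2 hSstar
        exact_mod_cast this
      have hcard : ((Sstar.erase vstar).card : ℝ) = (Sstar.card : ℝ) - 1 := by
        rw [Finset.card_erase_of_mem hv, Nat.cast_sub (by omega)]
        norm_num
      have hn1 : (0 : ℝ) < (Sstar.card : ℝ) - 1 := by
        have : (2 : ℝ) ≤ (Sstar.card : ℝ) := by exact_mod_cast hc2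
        linarith
      rw [density, density, hcard, div_le_div_iff₀ hn1 hn] at hle
      rw [density, div_le_iff₀ hn]
      nlinarith [hle, hE]
    · rw [Finset.not_nonempty_iff_eq_empty] at hone
      have h0 : edgeCount G Sstar = 0 := by
        rw [edgeCount, Finset.card_eq_zero, Finset.filter_eq_empty_iff]
        intro e he
        induction e using Sym2.ind with
        | _ a b =>
          have hab : G.Adj a b := SimpleGraph.mem_edgeFinset.1 he
          intro hall
          have haS : a ∈ Sstar := hall a (Sym2.mem_mk_left a b)
          have hbS : b ∈ Sstar := hall b (Sym2.mem_mk_right a b)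
          have ha : a = vstar := by
            by_contra hne
            exact Finset.notMem_empty a (hone ▸ Finset.mem_erase.2 ⟨hne, haS⟩)
          have hb : b = vstar := by
            by_contra hne
            exact Finset.notMem_empty b (hone ▸ Finset.mem_erase.2 ⟨hne, hbS⟩)
          exact G.irrefl (ha ▸ hb ▸ hab)
      rw [density, h0]
      simp
  -- Step 2: handshake + minimality
  have hsum : S'.card * degIn G S' vstar ≤ 2 * edgeCount G S' := by
    calc S'.card * degIn G S' vstar = ∑ _u ∈ S', degIn G S' vstar := by
          rw [Finset.sum_const, smul_eq_mul]
      _ ≤ ∑ u ∈ S', degIn G S' u := Finset.sum_le_sum (fun u hu => hmin u hu)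
      _ = 2 * edgeCount G S' := sum_degIn G S'
  have hsumR : (S'.card : ℝ) * (degIn G S' vstar : ℝ) ≤ 2 * (edgeCount G S' : ℝ) := by
    exact_mod_cast hsum
  have hhalf : (1 / 2 : ℝ) * (degIn G S' vstar : ℝ) ≤ density G S' := by
    rw [density, le_div_iff₀ hn']
    nlinarith
  linarith
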